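/- arXiv:2112.07464 — 6 statements merged into one kernel-verified Lean document; each statement's English description precedes it below -/
import Mathlib

section
/- (Proposition 1, ADMM fixed-point reformulation) Define v^k = x^{k+1} + μ^k, where (x^{k+1}, η^{k+1}) solves [[Q+ρI, Aᵀ],[A,0]](x^{k+1}, η^{k+1}) = (-(p - ρ(z^k - μ^k)), b), z^{k+1} = Π(v^k), and μ^{k+1} = v^k - Π(v^k). Then the ADMM iterations satisfy (v^{k+1}, η^{k+2}) = -M^{-1}(p - ρ(2Π(v^k) - v^k), -b) + (v^k, η^{k+1}) - (Π(v^k), η^{k+1}), where M = [[Q+ρI, Aᵀ],[A,0]]; that is, ADMM is a fixed-point iteration in the variable (v, η). -/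
/-!
Eliminating `z` and `μ` through `z^{k+1} = Π(v^k)` and `μ^{k+1} = v^k - Π(v^k)` turns the
right-hand side of the next KKT system into `-(p - ρ(2Π(v^k) - v^k), -b)`, so once the KKT matrix
`M` is known to be invertible the next primal-dual pair is `-M⁻¹(p - ρ(2Π(v^k) - v^k), -b)`, and
adding `μ^{k+1}` gives the update of `v`. `M` is invertible because a kernel vector `(x, y)` has
`xᵀ(Q + ρI)x = -xᵀAᵀy = -(Ax)ᵀy = 0`, forcing `x = 0` and then `Aᵀy = 0`, i.e. `y = 0`.
-/

open Matrix

theorem Matrix.injective_mulVec_transpose_of_rank_eq {R m n : Type*} [Field R] [Fintype m]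
    [Fintype n] {A : Matrix m n R} (hA : A.rank = Fintype.card m) :
    Function.Injective Aᵀ.mulVec := by
  rw [mulVec_injective_iff, col_transpose, linearIndependent_iff_card_eq_finrank_span,
    Set.finrank, ← rank_eq_finrank_span_row, hA]

theorem Matrix.isUnit_fromBlocks_transpose_zero {ι κ : Type*} [Fintype ι] [Fintype κ]
    [DecidableEq ι] [DecidableEq κ] {P : Matrix ι ι ℝ} (hP : P.PosDef) {A : Matrix κ ι ℝ}
    (hA : Function.Injective Aᵀ.mulVec) : IsUnit (fromBlocks P Aᵀ A 0) := by
  rw [← mulVec_injective_iff_isUnit, ← coe_mulVecLin, injective_iff_map_eq_zero]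
  intro w hw
  obtain ⟨x, y, rfl⟩ : ∃ x y, w = Sum.elim x y := ⟨_, _, (Sum.elim_comp_inl_inr w).symm⟩
  rw [mulVecLin_apply, fromBlocks_mulVec, Sum.elim_comp_inl, Sum.elim_comp_inr,
    ← Sum.elim_zero_zero, Sum.elim_eq_iff] at hw
  obtain ⟨hstat, hfeas⟩ := hw
  rw [zero_mulVec, add_zero] at hfeas
  have hx : x = 0 := by
    by_contra hx
    have hcurv : x ⬝ᵥ (P *ᵥ x) = 0 := by
      calc x ⬝ᵥ (P *ᵥ x) = x ⬝ᵥ (P *ᵥ x + Aᵀ *ᵥ y) - A *ᵥ x ⬝ᵥ y := by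
            rw [dotProduct_add, dotProduct_mulVec x Aᵀ, vecMul_transpose, add_sub_cancel_right]
        _ = 0 := by rw [hstat, hfeas, dotProduct_zero, zero_dotProduct, sub_zero]
    exact (hP.dotProduct_mulVec_pos hx).ne' (by simpa using hcurv)
  have hy : y = 0 := hA (by rwa [hx, mulVec_zero, zero_add, ← mulVec_zero Aᵀ] at hstat)
  rw [hx, hy, Sum.elim_zero_zero]

theorem admm_fixed_point_reformulation_general (n m : ℕ) (Q : Matrix (Fin n) (Fin n) ℝ)
    (A : Matrix (Fin m) (Fin n) ℝ) (hQ : Q.PosDef) (hA : A.rank = m)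
    (p : Fin n → ℝ) (b : Fin m → ℝ) (ρ : ℝ) (hρ : 0 < ρ)
    (proj : (Fin n → ℝ) → Fin n → ℝ)
    (M : Matrix (Fin n ⊕ Fin m) (Fin n ⊕ Fin m) ℝ)
    (hM : M = Matrix.fromBlocks (Q + ρ • 1) Aᵀ A 0)
    (x₂ : Fin n → ℝ) (η₁ η₂ : Fin m → ℝ)
    (v₀ : Fin n → ℝ)
    (z₁ : Fin n → ℝ) (hz₁ : z₁ = proj v₀)
    (μ₁ : Fin n → ℝ) (hμ₁ : μ₁ = v₀ - proj v₀)
    (h₂ : M *ᵥ Sum.elim x₂ η₂ = Sum.elim (-(p - ρ • (z₁ - μ₁))) b)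
    (v₁ : Fin n → ℝ) (hv₁ : v₁ = x₂ + μ₁) :
    Sum.elim v₁ η₂ =
      -(M⁻¹ *ᵥ Sum.elim (p - ρ • ((2 : ℝ) • proj v₀ - v₀)) (-b))
        + Sum.elim v₀ η₁ - Sum.elim (proj v₀) η₁ := by
  have hMdet : IsUnit M.det := by
    rw [← isUnit_iff_isUnit_det, hM]
    refine isUnit_fromBlocks_transpose_zero (hQ.add_posSemidef (PosSemidef.one.smul hρ.le)) ?_
    exact injective_mulVec_transpose_of_rank_eq (by rw [hA, Fintype.card_fin])
  have hrhs : Sum.elim (-(p - ρ • (z₁ - μ₁))) b =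
      -Sum.elim (p - ρ • ((2 : ℝ) • proj v₀ - v₀)) (-b) := by
    rw [← Sum.elim_neg_neg, neg_neg, hz₁, hμ₁, two_smul, sub_sub_eq_add_sub]
  have hkkt : Sum.elim x₂ η₂ = -(M⁻¹ *ᵥ Sum.elim (p - ρ • ((2 : ℝ) • proj v₀ - v₀)) (-b)) := by
    rw [← mulVec_neg, ← hrhs, ← h₂, mulVec_mulVec, nonsing_inv_mul M hMdet, one_mulVec]
  rw [← hkkt, ← Sum.elim_add_add, ← Sum.elim_sub_sub, hv₁, hμ₁, add_sub_cancel_right,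
    add_sub_assoc]

/-- Proposition 1: with `v^k = x^{k+1} + μ^k`, the scaled ADMM iterations for the
box-constrained QP can be cast as the fixed-point iteration
`(v^{k+1}, η^{k+2}) = -M⁻¹(p - ρ(2Π(v^k) - v^k), -b) + (v^k, η^{k+1}) - (Π(v^k), η^{k+1})`
with `M = [[Q + ρI, Aᵀ],[A, 0]]`. -/
theorem admm_fixed_point_reformulation (n m : ℕ) (Q : Matrix (Fin n) (Fin n) ℝ)
    (A : Matrix (Fin m) (Fin n) ℝ) (hQ : Q.PosDef) (hA : A.rank = m)
    (p l u : Fin n → ℝ) (b : Fin m → ℝ) (hlu : ∀ j, l j ≤ u j) (ρ : ℝ) (hρ : 0 < ρ)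
    (proj : (Fin n → ℝ) → Fin n → ℝ)
    (hproj : ∀ x j, proj x j = max (l j) (min (x j) (u j)))
    (M : Matrix (Fin n ⊕ Fin m) (Fin n ⊕ Fin m) ℝ)
    (hM : M = Matrix.fromBlocks (Q + ρ • 1) Aᵀ A 0)
    (z₀ μ₀ x₁ x₂ : Fin n → ℝ) (η₁ η₂ : Fin m → ℝ)
    (h₁ : M *ᵥ Sum.elim x₁ η₁ = Sum.elim (-(p - ρ • (z₀ - μ₀))) b)
    (v₀ : Fin n → ℝ) (hv₀ : v₀ = x₁ + μ₀)
    (z₁ : Fin n → ℝ) (hz₁ : z₁ = proj v₀)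
    (μ₁ : Fin n → ℝ) (hμ₁ : μ₁ = v₀ - proj v₀)
    (h₂ : M *ᵥ Sum.elim x₂ η₂ = Sum.elim (-(p - ρ • (z₁ - μ₁))) b)
    (v₁ : Fin n → ℝ) (hv₁ : v₁ = x₂ + μ₁) :
    Sum.elim v₁ η₂ =
      -(M⁻¹ *ᵥ Sum.elim (p - ρ • ((2 : ℝ) • proj v₀ - v₀)) (-b))
        + Sum.elim v₀ η₁ - Sum.elim (proj v₀) η₁ :=
  admm_fixed_point_reformulation_general n m Q A hQ hA p b ρ hρ proj M hM x₂ η₁ η₂ v₀ z₁ hz₁ μ₁ hμ₁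
    h₂ v₁ hv₁
end

section
/- At a fixed point v* of the ADMM map with z* = Π(v*) and μ* = v* - Π(v*), the quantities λ₋* = -min(ρμ*, 0) and λ₊* = max(ρμ*, 0) (componentwise) are nonnegative, satisfy λ₊* - λ₋* = ρμ*, and satisfy the complementary slackness conditions (λ₋*)_j (l_j - z*_j) = 0 and (λ₊*)_j (z*_j - u_j) = 0 for all j. -/
/-- At a fixed point `v*` of the ADMM map with `z* = Π(v*)` and `μ* = v* - Π(v*)`, the
multipliers `λ₋ = -min(ρμ*, 0)` and `λ₊ = max(ρμ*, 0)` are nonnegative, satisfy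
`λ₊ - λ₋ = ρμ*`, and satisfy complementary slackness. -/
theorem admm_multipliers_complementary_slackness (n : ℕ) (l u v : Fin n → ℝ)
    (hlu : ∀ j, l j ≤ u j) (ρ : ℝ) (hρ : 0 < ρ) (z μ lm lp : Fin n → ℝ)
    (hz : ∀ j, z j = max (l j) (min (v j) (u j)))
    (hμ : μ = v - z)
    (hlm : ∀ j, lm j = -(min (ρ * μ j) 0))
    (hlp : ∀ j, lp j = max (ρ * μ j) 0) :
    ∀ j, 0 ≤ lm j ∧ 0 ≤ lp j ∧ lp j - lm j = ρ * μ j ∧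
      lm j * (l j - z j) = 0 ∧ lp j * (z j - u j) = 0 := by
  intro j
  have hμj : μ j = v j - z j := by rw [hμ]; rfl
  have hzj := hz j
  have h := hlu j
  rcases le_total (v j) (l j) with h1 | h1
  · have hzl : z j = l j := by rw [hzj]; rw [min_eq_left (h1.trans h), max_eq_left h1]
    have : μ j ≤ 0 := by rw [hμj, hzl]; linarith
    have hρμ : ρ * μ j ≤ 0 := mul_nonpos_of_nonneg_of_nonpos hρ.le this
    refine ⟨?_, ?_, ?_, ?_, ?_⟩ <;>
      simp [hlm j, hlp j, min_eq_left hρμ, max_eq_right hρμ, hzl] <;> nlinarith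
  rcases le_total (u j) (v j) with h2 | h2
  · have hzu : z j = u j := by rw [hzj, min_eq_right h2, max_eq_right h]
    have : 0 ≤ μ j := by rw [hμj, hzu]; linarith
    have hρμ : 0 ≤ ρ * μ j := mul_nonneg hρ.le this
    refine ⟨?_, ?_, ?_, ?_, ?_⟩ <;>
      simp [hlm j, hlp j, min_eq_right hρμ, max_eq_left hρμ, hzu] <;> nlinarith
  · have hzv : z j = v j := by rw [hzj, min_eq_left h2, max_eq_right h1]
    have : μ j = 0 := by rw [hμj, hzv]; ring
    refine ⟨?_, ?_, ?_, ?_, ?_⟩ <;> simp [hlm j, hlp j, this]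
end

section
/- If v ∈ R^n is a fixed point of the ADMM map, i.e. (v, η) satisfies -M^{-1}(p - ρ(2Π(v) - v), -b) + (v, η) - (Π(v), η) = (v, η) with M = [[Q+ρI, Aᵀ],[A,0]], then x* = Π(v) satisfies the KKT conditions of the QP minimize (1/2)xᵀQx + pᵀx subject to Ax = b, l ≤ x ≤ u, with equality-constraint multiplier η and inequality multipliers λ₋* = -min(ρ(v - Π(v)), 0), λ₊* = max(ρ(v - Π(v)), 0): namely Qx* + p + Aᵀη - λ₋* + λ₊* = 0, Ax* = b, l ≤ x* ≤ u, λ₋*, λ₊* ≥ 0, and complementary slackness holds. -/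
/-!
Positive definiteness of `Q + ρI` together with the full row rank of `A` makes the KKT
matrix `M` invertible, so the fixed-point equation says exactly that
`M (Π v, η) = -(p - ρ(2Π v - v), -b)`.
The first block row is stationarity with `λ₊ - λ₋ = ρ(v - Π v)`, the second is `A Π v = b`.
Complementary slackness holds because the clamp residual `v - Π v` is positive only where
`Π v = u` and negative only where `Π v = l`.
-/

open Matrix

namespace Matrix

variable {m n K : Type*} [Fintype n]

theorem mulVec_injective_of_rank_eq_card [Field K] {A : Matrix m n K}
    (hA : A.rank = Fintype.card n) : Function.Injective A.mulVec := by
  have hker : Module.finrank K (LinearMap.ker A.mulVecLin) = 0 := by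
    have := LinearMap.finrank_range_add_finrank_ker A.mulVecLin
    rw [← rank, hA, Module.finrank_fintype_fun_eq_card] at this
    omega
  rw [← coe_mulVecLin, ← LinearMap.ker_eq_bot, ← Submodule.finrank_eq_zero, hker]

theorem fromBlocks_mulVec_sumElim [Fintype m] {α : Type*} [NonUnitalNonAssocSemiring α]
    (A : Matrix n n α) (B : Matrix n m α) (C : Matrix m n α) (D : Matrix m m α)
    (x : n → α) (y : m → α) :
    fromBlocks A B C D *ᵥ Sum.elim x y =
      Sum.elim (A *ᵥ x + B *ᵥ y) (C *ᵥ x + D *ᵥ y) := by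
  simp only [fromBlocks_mulVec, Sum.elim_comp_inl, Sum.elim_comp_inr]

theorem mulVec_inv_mulVec [Fintype m] [DecidableEq m] [CommRing K] {M : Matrix m m K}
    (hM : IsUnit M) (w : m → K) : M *ᵥ (M⁻¹ *ᵥ w) = w := by
  rw [mulVec_mulVec, mul_nonsing_inv _ ((isUnit_iff_isUnit_det M).1 hM), one_mulVec]

theorem PosDef.isUnit_fromBlocks_transpose_zero [Fintype m] [DecidableEq m] [DecidableEq n]
    {H : Matrix n n ℝ} (hH : H.PosDef) {A : Matrix m n ℝ}
    (hA : Function.Injective Aᵀ.mulVec) : IsUnit (fromBlocks H Aᵀ A 0) := by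
  refine mulVec_injective_iff_isUnit.1 ?_
  rw [← coe_mulVecLin, ← LinearMap.ker_eq_bot, ker_mulVecLin_eq_bot_iff]
  intro z hz
  obtain ⟨y, w, rfl⟩ : ∃ y w, z = Sum.elim y w :=
    ⟨z ∘ Sum.inl, z ∘ Sum.inr, (Sum.elim_comp_inl_inr z).symm⟩
  rw [fromBlocks_mulVec_sumElim, zero_mulVec, add_zero, ← Sum.elim_zero_zero,
    Sum.elim_eq_iff] at hz
  obtain ⟨hstat, hfeas⟩ := hz
  have hy : y = 0 := by
    by_contra hy
    have hcurv : y ⬝ᵥ (H *ᵥ y) = 0 := by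
      calc y ⬝ᵥ (H *ᵥ y) = y ⬝ᵥ (H *ᵥ y + Aᵀ *ᵥ w) - (A *ᵥ y) ⬝ᵥ w := by
            rw [dotProduct_add, dotProduct_mulVec y Aᵀ w, vecMul_transpose]; ring
        _ = 0 := by rw [hstat, hfeas, dotProduct_zero, zero_dotProduct, sub_zero]
    exact (hH.dotProduct_mulVec_pos hy).ne' (by simpa using hcurv)
  subst hy
  have hw : w = 0 := hA (by simpa using hstat)
  rw [hw, Sum.elim_zero_zero]

end Matrix

section Clamp

variable {α : Type*} [Ring α] [LinearOrder α] [IsStrictOrderedRing α] {l u v ρ : α}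

theorem complementary_slackness_lower_clamp (hρ : 0 ≤ ρ) :
    min (ρ * (v - max l (min v u))) 0 * (l - max l (min v u)) = 0 := by
  rcases le_total l (min v u) with h | h
  · have hcv : max l (min v u) ≤ v := (max_eq_right h).symm ▸ min_le_left v u
    rw [min_eq_right (mul_nonneg hρ (sub_nonneg.2 hcv)), zero_mul]
  · rw [max_eq_left h, sub_self, mul_zero]

theorem complementary_slackness_upper_clamp (hlu : l ≤ u) (hρ : 0 ≤ ρ) :
    max (ρ * (v - max l (min v u))) 0 * (max l (min v u) - u) = 0 := by
  rcases le_total u v with h | h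
  · rw [min_eq_right h, max_eq_right hlu, sub_self, mul_zero]
  · have hvc : v ≤ max l (min v u) := (min_eq_left h).symm ▸ le_max_right l v
    rw [max_eq_right (mul_nonpos_of_nonneg_of_nonpos hρ (sub_nonpos.2 hvc)), zero_mul]

end Clamp

/-- If `(v, η)` is a fixed point of the ADMM map, then `x* = Π(v)` satisfies the KKT
conditions of the QP `min (1/2)xᵀQx + pᵀx s.t. Ax = b, l ≤ x ≤ u` with multipliers `η`,
`λ₋ = -min(ρ(v - Π(v)), 0)`, `λ₊ = max(ρ(v - Π(v)), 0)`. -/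
theorem admm_fixed_point_satisfies_kkt (n m : ℕ) (Q : Matrix (Fin n) (Fin n) ℝ)
    (A : Matrix (Fin m) (Fin n) ℝ) (hQ : Q.PosDef) (hA : A.rank = m)
    (p l u : Fin n → ℝ) (b : Fin m → ℝ) (hlu : ∀ j, l j ≤ u j) (ρ : ℝ) (hρ : 0 < ρ)
    (proj : (Fin n → ℝ) → Fin n → ℝ)
    (hproj : ∀ x j, proj x j = max (l j) (min (x j) (u j)))
    (v : Fin n → ℝ) (η : Fin m → ℝ)
    (M : Matrix (Fin n ⊕ Fin m) (Fin n ⊕ Fin m) ℝ)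
    (hM : M = Matrix.fromBlocks (Q + ρ • 1) Aᵀ A 0)
    (hfix : -(M⁻¹ *ᵥ Sum.elim (p - ρ • ((2 : ℝ) • proj v - v)) (-b))
        + Sum.elim v η - Sum.elim (proj v) η = Sum.elim v η)
    (x lm lp : Fin n → ℝ) (hx : x = proj v)
    (hlm : ∀ j, lm j = -(min (ρ * (v j - proj v j)) 0))
    (hlp : ∀ j, lp j = max (ρ * (v j - proj v j)) 0) :
    Q *ᵥ x + p + Aᵀ *ᵥ η - lm + lp = 0 ∧
    A *ᵥ x = b ∧
    (∀ j, l j ≤ x j ∧ x j ≤ u j) ∧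
    (∀ j, 0 ≤ lm j ∧ 0 ≤ lp j ∧ lm j * (l j - x j) = 0 ∧ lp j * (x j - u j) = 0) := by
  subst hM hx
  have hKKT : IsUnit (fromBlocks (Q + ρ • 1) Aᵀ A 0) :=
    (hQ.add_posSemidef (PosSemidef.one.smul hρ.le)).isUnit_fromBlocks_transpose_zero
      (mulVec_injective_of_rank_eq_card (by rw [rank_transpose, hA, Fintype.card_fin]))
  have hsol : fromBlocks (Q + ρ • 1) Aᵀ A 0 *ᵥ Sum.elim (proj v) η
      = -Sum.elim (p - ρ • ((2 : ℝ) • proj v - v)) (-b) := by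
    rw [← mulVec_inv_mulVec hKKT (-_), mulVec_neg]
    congr 1
    linear_combination -hfix
  rw [fromBlocks_mulVec_sumElim, zero_mulVec, add_zero, ← Sum.elim_neg_neg, Sum.elim_eq_iff,
    neg_neg] at hsol
  obtain ⟨hstat, hfeas⟩ := hsol
  rw [add_mulVec, smul_mulVec, one_mulVec] at hstat
  have hmult : -lm + lp = ρ • (v - proj v) := funext fun j => by
    simp only [Pi.add_apply, Pi.neg_apply, hlm, hlp, neg_neg, min_add_max, add_zero,
      Pi.smul_apply, smul_eq_mul, Pi.sub_apply]
  refine ⟨?_, hfeas, fun j => ?_, fun j => ?_⟩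
  · linear_combination (norm := module) hstat + hmult
  · rw [hproj]
    exact ⟨le_max_left _ _, max_le (hlu j) (min_le_right _ _)⟩
  · rw [hlm, hlp, hproj]
    exact ⟨neg_nonneg.2 (min_le_right _ _), le_max_right _ _,
      by rw [neg_mul, complementary_slackness_lower_clamp hρ.le, neg_zero],
      complementary_slackness_upper_clamp (hlu j) hρ.le⟩
end

section
/- The maximization of the Sharpe ratio aᵀz / sqrt(zᵀQz) over the simplex {z : 1ᵀz = 1, z ≥ 0} is equivalent to the convex QP: minimize (1/2)yᵀQy subject to aᵀy = 1, y ≥ 0; specifically, if y* solves the QP and 1ᵀy* > 0, then z* = y*/(1ᵀy*) maximizes the Sharpe ratio over the simplex, provided there exists a feasible z with aᵀz > 0. -/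
/-!
The Sharpe ratio is invariant under positive scaling, so on the nonnegative orthant it only
has to be compared on the slice `aᵀw = 1`, where it equals `1 / √(wᵀQw)`. There it is maximal
exactly where `wᵀQw` is minimal, i.e. at the QP solution `y`; directions with `aᵀw ≤ 0` have a
nonpositive ratio. Rescaling `y` onto the simplex does not change its ratio.
-/

open Matrix

section SharpeRatio

variable {ι : Type*} [Fintype ι] (Q : Matrix ι ι ℝ) (a : ι → ℝ)

noncomputable def sharpeRatio (w : ι → ℝ) : ℝ :=
  a ⬝ᵥ w / √(w ⬝ᵥ Q *ᵥ w)

theorem smul_dotProduct_mulVec_smul (c : ℝ) (w : ι → ℝ) :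
    (c • w) ⬝ᵥ Q *ᵥ (c • w) = c ^ 2 * (w ⬝ᵥ Q *ᵥ w) := by
  rw [mulVec_smul, smul_dotProduct, dotProduct_smul, smul_eq_mul, smul_eq_mul]
  ring

theorem sharpeRatio_smul {c : ℝ} (hc : 0 < c) (w : ι → ℝ) :
    sharpeRatio Q a (c • w) = sharpeRatio Q a w := by
  rw [sharpeRatio, sharpeRatio, smul_dotProduct_mulVec_smul, Real.sqrt_mul (sq_nonneg c),
    Real.sqrt_sq hc.le, dotProduct_smul, smul_eq_mul, mul_div_mul_left _ _ hc.ne']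

theorem sharpeRatio_of_dotProduct_eq_one {w : ι → ℝ} (hw : a ⬝ᵥ w = 1) :
    sharpeRatio Q a w = (√(w ⬝ᵥ Q *ᵥ w))⁻¹ := by
  rw [sharpeRatio, hw, one_div]

theorem PosDef.isMaxOn_sharpeRatio_of_isMinOn (hQ : Q.PosDef) {y : ι → ℝ} (hay : a ⬝ᵥ y = 1)
    (hmin : IsMinOn (fun w ↦ w ⬝ᵥ Q *ᵥ w) {w | a ⬝ᵥ w = 1 ∧ 0 ≤ w} y) :
    IsMaxOn (sharpeRatio Q a) {w | 0 ≤ w} y := by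
  have hy : y ≠ 0 := by
    rintro rfl
    simp at hay
  have hsqrt_pos : 0 < √(y ⬝ᵥ Q *ᵥ y) := Real.sqrt_pos.mpr (hQ.dotProduct_mulVec_pos hy)
  intro w (hw : 0 ≤ w)
  change sharpeRatio Q a w ≤ sharpeRatio Q a y
  rw [sharpeRatio_of_dotProduct_eq_one Q a hay]
  rcases le_or_gt (a ⬝ᵥ w) 0 with haw | haw
  · exact (div_nonpos_of_nonpos_of_nonneg haw (Real.sqrt_nonneg _)).trans (by positivity)
  · set v := (a ⬝ᵥ w)⁻¹ • w
    have hav : a ⬝ᵥ v = 1 := by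
      rw [dotProduct_smul, smul_eq_mul, inv_mul_cancel₀ haw.ne']
    have hv : 0 ≤ v := smul_nonneg (inv_nonneg.mpr haw.le) hw
    rw [← sharpeRatio_smul Q a (inv_pos.mpr haw), sharpeRatio_of_dotProduct_eq_one Q a hav]
    exact inv_anti₀ hsqrt_pos (Real.sqrt_le_sqrt (hmin ⟨hav, hv⟩))

end SharpeRatio

theorem max_sharpe_via_qp_general (n : ℕ) (Q : Matrix (Fin n) (Fin n) ℝ) (hQ : Q.PosDef)
    (a : Fin n → ℝ)
    (y : Fin n → ℝ) (hay : a ⬝ᵥ y = 1) (hy0 : ∀ j, 0 ≤ y j)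
    (hymin : ∀ w : Fin n → ℝ, a ⬝ᵥ w = 1 → (∀ j, 0 ≤ w j) →
      (1 / 2) * (y ⬝ᵥ Q *ᵥ y) ≤ (1 / 2) * (w ⬝ᵥ Q *ᵥ w))
    (hsum : 0 < ∑ j, y j)
    (z : Fin n → ℝ) (hz : z = (∑ j, y j)⁻¹ • y) :
    ((∑ j, z j) = 1 ∧ ∀ j, 0 ≤ z j) ∧
    ∀ w : Fin n → ℝ, (∑ j, w j) = 1 → (∀ j, 0 ≤ w j) →
      a ⬝ᵥ w / Real.sqrt (w ⬝ᵥ Q *ᵥ w) ≤ a ⬝ᵥ z / Real.sqrt (z ⬝ᵥ Q *ᵥ z) := by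
  have hmin : IsMinOn (fun w ↦ w ⬝ᵥ Q *ᵥ w) {w | a ⬝ᵥ w = 1 ∧ 0 ≤ w} y :=
    fun w ⟨haw, hw⟩ ↦ le_of_mul_le_mul_left (hymin w haw hw) one_half_pos
  have hmax := PosDef.isMaxOn_sharpeRatio_of_isMinOn Q a hQ hay hmin
  have hz_sharpe : sharpeRatio Q a z = sharpeRatio Q a y := by
    rw [hz, sharpeRatio_smul Q a (inv_pos.mpr hsum)]
  refine ⟨⟨?_, fun j ↦ ?_⟩, fun w _ hw ↦ ?_⟩
  · simp only [hz, Pi.smul_apply, smul_eq_mul, ← Finset.mul_sum, inv_mul_cancel₀ hsum.ne']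
  · rw [hz]
    exact mul_nonneg (inv_nonneg.mpr hsum.le) (hy0 j)
  · exact (hmax (show 0 ≤ w from hw)).trans_eq hz_sharpe.symm

/-- Max-Sharpe via QP: if `y` solves `min (1/2)yᵀQy s.t. aᵀy = 1, y ≥ 0` and `1ᵀy > 0`,
then `z = y / (1ᵀy)` maximizes the Sharpe ratio `aᵀw / sqrt(wᵀQw)` over the simplex,
provided some feasible `w` has `aᵀw > 0`. -/
theorem max_sharpe_via_qp (n : ℕ) (Q : Matrix (Fin n) (Fin n) ℝ) (hQ : Q.PosDef)
    (a : Fin n → ℝ)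
    (hpos : ∃ w : Fin n → ℝ, (∑ j, w j) = 1 ∧ (∀ j, 0 ≤ w j) ∧ 0 < a ⬝ᵥ w)
    (y : Fin n → ℝ) (hay : a ⬝ᵥ y = 1) (hy0 : ∀ j, 0 ≤ y j)
    (hymin : ∀ w : Fin n → ℝ, a ⬝ᵥ w = 1 → (∀ j, 0 ≤ w j) →
      (1 / 2) * (y ⬝ᵥ Q *ᵥ y) ≤ (1 / 2) * (w ⬝ᵥ Q *ᵥ w))
    (hsum : 0 < ∑ j, y j)
    (z : Fin n → ℝ) (hz : z = (∑ j, y j)⁻¹ • y) :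
    ((∑ j, z j) = 1 ∧ ∀ j, 0 ≤ z j) ∧
    ∀ w : Fin n → ℝ, (∑ j, w j) = 1 → (∀ j, 0 ≤ w j) →
      a ⬝ᵥ w / Real.sqrt (w ⬝ᵥ Q *ᵥ w) ≤ a ⬝ᵥ z / Real.sqrt (z ⬝ᵥ Q *ᵥ z) :=
  max_sharpe_via_qp_general n Q hQ a y hay hy0 hymin hsum z hz
end

section
/- If Q is symmetric positive definite and ρ > 0 with M = [[Q + ρI, Aᵀ],[A, 0]] invertible, and D is a diagonal matrix with entries in {0,1}, then the matrix [[D, 0],[0, I]]·M + [[-ρ(2D - I), 0],[0, 0]] = [[D(Q + ρI) - ρ(2D - I), DAᵀ],[A, 0]] = [[DQ - ρD + ρI, DAᵀ],[A, 0]] is invertible provided A restricted to the coordinates where D = 1 has full row rank. -/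
open Matrix

/-- With `Q` symmetric positive definite, `ρ > 0`, and `D = diag(d)` with 0/1 entries, the
backward-pass matrix `[[DQ + ρ(I - D), DAᵀ],[A, 0]]` is invertible provided the submatrix
of `A` consisting of the columns `j` with `d j = 1` has full row rank. -/
theorem backward_pass_matrix_invertible (n m : ℕ) (Q : Matrix (Fin n) (Fin n) ℝ)
    (hQ : Q.PosDef) (ρ : ℝ) (hρ : 0 < ρ) (A : Matrix (Fin m) (Fin n) ℝ)
    (d : Fin n → ℝ) (hd : ∀ j, d j = 0 ∨ d j = 1)
    (D : Matrix (Fin n) (Fin n) ℝ) (hD : D = Matrix.diagonal d)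
    (hAsub : (A.submatrix id (fun j : {j : Fin n // d j = 1} => (j : Fin n))).rank = m) :
    IsUnit (Matrix.fromBlocks (D * Q + ρ • ((1 : Matrix (Fin n) (Fin n) ℝ) - D))
      (D * Aᵀ) A (0 : Matrix (Fin m) (Fin m) ℝ)) := by
  subst hD
  rw [Matrix.isUnit_iff_isUnit_det, isUnit_iff_ne_zero]
  intro hdet
  obtain ⟨v, hv, hKv⟩ := (Matrix.exists_mulVec_eq_zero_iff).mpr hdet
  set x : Fin n → ℝ := v ∘ Sum.inl with hx
  set y : Fin m → ℝ := v ∘ Sum.inr with hy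
  have hv' : v = Sum.elim x y := by funext i; cases i <;> rfl
  rw [hv', Matrix.fromBlocks_mulVec] at hKv
  have h2 : A *ᵥ x = 0 := by
    funext i
    have := congrFun hKv (Sum.inr i)
    simpa using this
  have h1 : ∀ i, d i * ((Q *ᵥ x) i + (Aᵀ *ᵥ y) i) + ρ * (x i - d i * x i) = 0 := by
    intro i
    have h := congrFun hKv (Sum.inl i)
    simp only [Sum.elim_inl, Matrix.add_mulVec, Matrix.smul_mulVec, Matrix.sub_mulVec,
      Matrix.one_mulVec, Pi.add_apply, Pi.smul_apply, Pi.sub_apply, Pi.zero_apply,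
      ← Matrix.mulVec_mulVec, Matrix.mulVec_diagonal, smul_eq_mul, Sum.elim_comp_inl, Sum.elim_comp_inr] at h
    -- h should now be: d i * (Q *ᵥ x) i + ρ * (x i - d i * x i) + d i * (Aᵀ *ᵥ y) i = 0
    linarith [h]
  have hx0 : ∀ i, d i = 0 → x i = 0 := by
    intro i h0
    have h := h1 i
    rw [h0] at h
    simp only [zero_mul, mul_zero, zero_add, sub_zero] at h
    have := mul_eq_zero.mp h
    rcases this with h' | h'
    · exact absurd h' (ne_of_gt hρ)
    · exact h'
  have hx1 : ∀ i, d i = 1 → (Q *ᵥ x) i + (Aᵀ *ᵥ y) i = 0 := by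
    intro i hi
    have h := h1 i
    rw [hi] at h
    linarith
  have hxy : x ⬝ᵥ (Aᵀ *ᵥ y) = 0 := by
    rw [Matrix.dotProduct_mulVec, Matrix.vecMul_transpose, h2]
    simp
  have hsum : x ⬝ᵥ (Q *ᵥ x + Aᵀ *ᵥ y) = 0 := by
    rw [dotProduct]
    apply Finset.sum_eq_zero
    intro i _
    rcases hd i with h0 | hone
    · simp [hx0 i h0]
    · simp only [Pi.add_apply, hx1 i hone, mul_zero]
  have hqx : x ⬝ᵥ (Q *ᵥ x) = 0 := by
    rw [dotProduct_add] at hsum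
    linarith [hxy]
  have hx00 : x = 0 := by
    by_contra xne
    have := hQ.dotProduct_mulVec_pos xne
    rw [star_trivial] at this
    linarith
  have hAy : ∀ i, d i = 1 → (Aᵀ *ᵥ y) i = 0 := by
    intro i hi
    have := hx1 i hi
    rw [hx00] at this
    simpa using this
  -- now y = 0 using full row rank of the submatrix
  set B := A.submatrix id (fun j : {j : Fin n // d j = 1} => (j : Fin n)) with hB
  have hBty : Bᵀ *ᵥ y = 0 := by
    funext j
    have := hAy j.1 j.2
    simpa [Matrix.mulVec, dotProduct, hB, Matrix.transpose_apply,
      Matrix.submatrix_apply] using this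
  have hrankT : Bᵀ.rank = m := by rw [Matrix.rank_transpose]; exact hAsub
  have hker : LinearMap.ker Bᵀ.mulVecLin = ⊥ := by
    have hrn := LinearMap.finrank_range_add_finrank_ker Bᵀ.mulVecLin
    rw [show Module.finrank ℝ (LinearMap.range Bᵀ.mulVecLin) = m from hrankT] at hrn
    have : Module.finrank ℝ (LinearMap.ker Bᵀ.mulVecLin) = 0 := by
      have : Module.finrank ℝ (Fin m → ℝ) = m := by simp
      omega
    exact Submodule.finrank_eq_zero.mp this
  have hy0 : y = 0 := by
    have : y ∈ LinearMap.ker Bᵀ.mulVecLin := by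
      rw [LinearMap.mem_ker, Matrix.mulVecLin_apply]; exact hBty
    rw [hker] at this
    simpa using this
  apply hv
  rw [hv', hx00, hy0]
  funext i
  cases i <;> simp
end

section
/- Equivalence of the two expressions for the backward-pass gradient: with M = [[Q+ρI, Aᵀ],[A,0]] invertible, J = I - ∇F where ∇F = -M^{-1}·[[-ρ(2D - I), 0],[0,0]] + [[I,0],[0,I]] - [[D,0],[0,I]] (D diagonal with 0/1 entries), and P = [[D,0],[0,I]], one has M^{-1}·J^{-T}·P·g = [P·M + [[-ρ(2D-I),0],[0,0]]]^{-1}·P·g for any vector g, provided all indicated inverses exist and M, Q are symmetric so that M^T = M. -/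
open Matrix

/-- Equivalence of the two expressions for the backward-pass gradient: with `M` symmetric
and invertible, `P = blockdiag(D, I)`, `R = [[-ρ(2D - I), 0],[0, 0]]`,
`∇F = -M⁻¹R + I - P` and `J = I - ∇F`, one has
`M⁻¹ J⁻ᵀ P g = (PM + R)⁻¹ P g` for every vector `g`, provided the indicated inverses
exist. -/
theorem backward_pass_gradient_equivalence (n m : ℕ) (Q : Matrix (Fin n) (Fin n) ℝ)
    (hQsym : Q.IsSymm) (ρ : ℝ) (A : Matrix (Fin m) (Fin n) ℝ)
    (d : Fin n → ℝ) (hd : ∀ j, d j = 0 ∨ d j = 1)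
    (D : Matrix (Fin n) (Fin n) ℝ) (hD : D = Matrix.diagonal d)
    (M P R dF J : Matrix (Fin n ⊕ Fin m) (Fin n ⊕ Fin m) ℝ)
    (hM : M = Matrix.fromBlocks (Q + ρ • 1) Aᵀ A 0)
    (hP : P = Matrix.fromBlocks D 0 0 1)
    (hR : R = Matrix.fromBlocks (-(ρ • ((2 : ℝ) • D - 1))) 0 0 0)
    (hdF : dF = -(M⁻¹ * R) + 1 - P)
    (hJ : J = 1 - dF)
    (hMinv : IsUnit M) (hJinv : IsUnit J) (hPMR : IsUnit (P * M + R)) :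
    ∀ g : Fin n ⊕ Fin m → ℝ,
      M⁻¹ *ᵥ ((Jᵀ)⁻¹ *ᵥ (P *ᵥ g)) = (P * M + R)⁻¹ *ᵥ (P *ᵥ g) := by
  intro g
  have hDsym : Dᵀ = D := by rw [hD, Matrix.diagonal_transpose]
  have hMsym : Mᵀ = M := by
    simp [hM, Matrix.fromBlocks_transpose, Matrix.transpose_add, hQsym.eq]
  have hRsym : Rᵀ = R := by
    simp [hR, Matrix.fromBlocks_transpose, hDsym]
  have hPsym : Pᵀ = P := by
    simp [hP, Matrix.fromBlocks_transpose, hDsym]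
  have hJ' : J = M⁻¹ * R + P := by rw [hJ, hdF]; abel
  have hJT : Jᵀ = R * M⁻¹ + P := by
    rw [hJ', Matrix.transpose_add, Matrix.transpose_mul, hRsym, hPsym,
      Matrix.transpose_nonsing_inv, hMsym]
  have hinvM : M⁻¹ * M = 1 := Matrix.nonsing_inv_mul M ((Matrix.isUnit_iff_isUnit_det M).mp hMinv)
  have hkey : Jᵀ * M = P * M + R := by
    rw [hJT, add_mul, Matrix.mul_assoc, hinvM, Matrix.mul_one, add_comm]
  have : (P * M + R)⁻¹ = M⁻¹ * (Jᵀ)⁻¹ := by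
    rw [← hkey, Matrix.mul_inv_rev]
  rw [this, ← Matrix.mulVec_mulVec]
end
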